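/- If ℓ = t(n−1) + 2, m − 2 is not divisible by n − 1, and T is a tree on n vertices with T ≠ K_{1,n−1}, then r(K_{1,ℓ}, T, K_m) = (ℓ + n − 3)(m−1) + 1 = (t+1)(n−1)(m−1) + 1. -/

import Mathlib

/-!
Write `k = ℓ + n - 3 = (t + 1)(n - 1)`.

Upper bound. Take a colouring of `K_{k(m-1)+1}` with no `K_{1,ℓ}` in colour 0 and no `T` in
colour 1; induct on `m`. If some vertex has more than `k(m-2)` neighbours in colour 2, recurse
into that neighbourhood. Otherwise every vertex has at least `n - 2` neighbours in colour 1.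
But a graph of minimum degree `n - 2` without a copy of `T` is a disjoint union of copies of
`K_{n-1}`: since `T` is not a star, it has a leaf `y` at a vertex `z` with a path `z a b`, and a
greedy embedding of `T` starting from a suitable path `r x x'` succeeds as soon as some vertex
has degree `n - 1` or some component is larger than a closed neighbourhood. So `n - 1` divides
`k(m-1) + 1`, which is impossible because `n - 1` divides `k`.

Lower bound. Split `k(m-1)` vertices into `m - 1` groups of `t + 1` blocks of `n - 1`
vertices, and colour pairs in different groups 2, pairs in different blocks of one group 0,
and pairs inside a block 1.
-/

open SimpleGraph
open scoped Classical

/-- `H` embeds into `G`: there is an injective graph homomorphism from `H` to `G`. -/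
def Copies {α : Type*} {β : Type*} (H : SimpleGraph α) (G : SimpleGraph β) : Prop :=
  ∃ f : α → β, Function.Injective f ∧ ∀ ⦃a b : α⦄, H.Adj a b → G.Adj (f a) (f b)

/-- the star `K_{1,ℓ}` with `ℓ` leaves and center `0`. -/
def starGraph (ℓ : ℕ) : SimpleGraph (Fin (ℓ + 1)) :=
  SimpleGraph.fromRel (fun a _ => a = 0)

/-- the graph of color `i` for a symmetric edge-coloring `c`. -/
def colorGraph {N k : ℕ} (c : Fin N → Fin N → Fin k) (i : Fin k) : SimpleGraph (Fin N) :=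
  SimpleGraph.fromRel (fun a b => c a b = i)

/-- `K_N → (G₁, G₂)`: every red-blue coloring of `E(K_N)` yields a red `G₁` or a blue `G₂`. -/
def RamseyProp2 {α β : Type*} (N : ℕ) (G₁ : SimpleGraph α) (G₂ : SimpleGraph β) : Prop :=
  ∀ R : SimpleGraph (Fin N), Copies G₁ R ∨ Copies G₂ Rᶜ

/-- the 2-color Ramsey number `r(G₁, G₂)`. -/
noncomputable def ramsey2 {α β : Type*} (G₁ : SimpleGraph α) (G₂ : SimpleGraph β) : ℕ :=
  sInf {N | RamseyProp2 N G₁ G₂}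

/-- `K_N → (G₁, G₂, G₃)` for 3-colorings. -/
def RamseyProp3 {α β γ : Type*} (N : ℕ) (G₁ : SimpleGraph α) (G₂ : SimpleGraph β)
    (G₃ : SimpleGraph γ) : Prop :=
  ∀ c : Fin N → Fin N → Fin 3, (∀ a b, c a b = c b a) →
    Copies G₁ (colorGraph c 0) ∨ Copies G₂ (colorGraph c 1) ∨ Copies G₃ (colorGraph c 2)

/-- the 3-color Ramsey number `r(G₁, G₂, G₃)`. -/
noncomputable def ramsey3 {α β γ : Type*} (G₁ : SimpleGraph α) (G₂ : SimpleGraph β)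
    (G₃ : SimpleGraph γ) : ℕ :=
  sInf {N | RamseyProp3 N G₁ G₂ G₃}

/-- the chromatic number as a natural number. -/
noncomputable def chrom {β : Type*} (H : SimpleGraph β) : ℕ :=
  sInf {k | H.Colorable k}

/-- the surplus `s(H)`: the minimum size of a color class over proper colorings of `H`
with `chrom H` colors. -/
noncomputable def surplus {β : Type*} [Fintype β] (H : SimpleGraph β) : ℕ :=
  sInf {s | ∃ C : H.Coloring (Fin (chrom H)), ∃ i : Fin (chrom H),
    s = (Finset.univ.filter (fun v => C v = i)).card}

open Finset

namespace SimpleGraph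

variable {α β : Type*}

theorem Reachable.eq_of_forall_adj {G : SimpleGraph α} {g : α → β}
    (hg : ∀ ⦃u v⦄, G.Adj u v → g u = g v) {u v : α} (h : G.Reachable u v) : g u = g v := by
  obtain ⟨p⟩ := h
  induction p with
  | nil => rfl
  | cons h _ ih => exact (hg h).trans ih

theorem nonempty_iso_starGraph [Fintype α] [Fintype β] (h : Fintype.card α = Fintype.card β)
    (r : α) (s : β) : Nonempty (SimpleGraph.starGraph r ≃g SimpleGraph.starGraph s) := by
  let e₀ := Fintype.equivOfCardEq h
  let e := e₀.trans (Equiv.swap (e₀ r) s)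
  have he : ∀ v, e v = s ↔ v = r := fun v => by
    rw [show s = e r by simp [e], e.apply_eq_iff_eq]
  exact ⟨⟨e, by simp [starGraph_adj, he]⟩⟩

theorem Connected.exists_adj_dist_lt {G : SimpleGraph α} (hG : G.Connected) {z w : α}
    (hw : w ≠ z) : ∃ p, G.Adj p w ∧ G.dist z p < G.dist z w := by
  obtain ⟨q, hq⟩ := hG.exists_walk_length_eq_dist w z
  cases q with
  | nil => exact absurd rfl hw
  | cons h q =>
    refine ⟨_, h.symm, ?_⟩
    rw [dist_comm, dist_comm (u := z), ← hq, Walk.length_cons]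
    exact Nat.lt_succ_of_le (dist_le q)

theorem Connected.exists_adj_adj_ne {G : SimpleGraph α} (hG : G.Connected) {z w : α}
    (hzw : z ≠ w) (hadj : ¬ G.Adj z w) : ∃ a b, G.Adj z a ∧ G.Adj a b ∧ b ≠ z := by
  obtain ⟨p, hp⟩ := hG.exists_isPath z w
  match p, hp with
  | .nil, _ => exact absurd rfl hzw
  | .cons h .nil, _ => exact absurd h hadj
  | .cons h (.cons h' q), hp =>
    refine ⟨_, _, h, h', fun hb => ?_⟩
    simp only [Walk.cons_isPath_iff, Walk.support_cons, List.mem_cons, not_or] at hp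
    exact hp.2.2 (hb ▸ q.start_mem_support)

theorem exists_adj_notMem [Fintype β] {G : SimpleGraph β} [DecidableRel G.Adj] {x : β}
    {A B : Finset β} (hBA : B ⊆ A) (hB : ∀ b ∈ B, ¬ G.Adj x b) (hA : #A < G.degree x + #B) :
    ∃ y, G.Adj x y ∧ y ∉ A := by
  have hsub : A.filter (G.Adj x) ⊆ A \ B := fun y hy =>
    mem_sdiff.2 ⟨(mem_filter.1 hy).1, fun hyB => hB y hyB (mem_filter.1 hy).2⟩
  have := card_le_card hsub
  rw [card_sdiff_of_subset hBA] at this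
  have := card_le_card hBA
  obtain ⟨y, hy, hyA⟩ := exists_mem_notMem_of_card_lt_card (s := A.filter (G.Adj x))
    (t := G.neighborFinset x) (by rw [card_neighborFinset_eq_degree]; omega)
  rw [mem_neighborFinset] at hy
  exact ⟨y, hy, fun h => hyA (mem_filter.2 ⟨h, hy⟩)⟩

variable {T : SimpleGraph α}

theorem IsTree.eq_of_adj_of_dist_lt [Fintype α] (hT : T.IsTree) {z p p' w : α}
    (hp : T.Adj p w) (hp' : T.Adj p' w) (hpw : T.dist z p < T.dist z w)
    (hp'w : T.dist z p' < T.dist z w) : p = p' := by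
  have hex : ∀ v, ∃ q, v ≠ z → T.Adj q v ∧ T.dist z q < T.dist z v := fun v => by
    by_cases hv : v = z
    · exact ⟨v, fun h => absurd hv h⟩
    · obtain ⟨q, hq⟩ := hT.connected.exists_adj_dist_lt hv
      exact ⟨q, fun _ => hq⟩
  choose P hP using hex
  -- every vertex but `z` is joined to `P v`; counting shows these are all the edges of `T`
  have hinj : Set.InjOn (fun v => s(P v, v)) ↑(univ.erase z) := by
    intro v hv v' hv' h
    rw [mem_coe, mem_erase] at hv hv'
    rcases Sym2.eq_iff.1 h with ⟨-, h⟩ | ⟨h₁, h₂⟩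
    · exact h
    · have h₃ := (hP v hv.1).2
      have h₄ := (hP v' hv'.1).2
      rw [h₁] at h₃
      rw [← h₂] at h₄
      omega
  have himage : (univ.erase z).image (fun v => s(P v, v)) = T.edgeFinset := by
    refine eq_of_subset_of_card_le (fun e he => ?_) ?_
    · obtain ⟨v, hv, rfl⟩ := mem_image.1 he
      exact mem_edgeFinset.2 (hP v (ne_of_mem_erase hv)).1
    · rw [card_image_of_injOn hinj, card_erase_of_mem (mem_univ _), card_univ,
        ← hT.card_edgeFinset, Nat.add_sub_cancel]
  have hparent : ∀ q, T.Adj q w → T.dist z q < T.dist z w → q = P w := by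
    intro q hq hqw
    obtain ⟨v, hv, h⟩ := mem_image.1 (himage ▸ (mem_edgeFinset.2 hq : s(q, w) ∈ T.edgeFinset))
    rcases Sym2.eq_iff.1 h with ⟨h₁, rfl⟩ | ⟨rfl, rfl⟩
    · exact h₁.symm
    · have := (hP _ (ne_of_mem_erase hv)).2
      omega
  rw [hparent p hp hpw, hparent p' hp' hp'w]

theorem IsTree.exists_adj_adj_of_ne_starGraph (hT : T.IsTree) {z : α}
    (hz : T ≠ SimpleGraph.starGraph z) : ∃ a b, T.Adj z a ∧ T.Adj a b ∧ b ≠ z := by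
  by_contra! h
  have hzw : ∀ w, w ≠ z → T.Adj z w := fun w hw => by
    by_contra hzw
    obtain ⟨a, b, hza, hab, hbz⟩ := hT.connected.exists_adj_adj_ne hw.symm hzw
    exact hbz (h a b hza hab)
  refine hz (SimpleGraph.ext (funext₂ fun u v => propext ?_))
  rw [starGraph_adj]
  constructor
  · intro huv
    exact ⟨huv.ne, or_iff_not_imp_left.2 fun hu => h u v (hzw u hu) huv⟩
  · rintro ⟨huv, rfl | rfl⟩
    · exact hzw v huv.symm
    · exact (hzw u huv).symm

theorem IsTree.exists_leaf_adj_adj [Fintype α] (hT : T.IsTree)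
    (hstar : ∀ z, T ≠ SimpleGraph.starGraph z) :
    ∃ y z a b, T.Adj y z ∧ (∀ w, T.Adj y w → w = z) ∧ T.Adj z a ∧ T.Adj a b ∧ b ≠ z := by
  have : Nontrivial α := by
    by_contra h
    rw [not_nontrivial_iff_subsingleton] at h
    obtain ⟨z⟩ := hT.connected.nonempty
    refine hstar z (SimpleGraph.ext (funext₂ fun u v => ?_))
    simp [Subsingleton.elim u v]
  obtain ⟨y, hy⟩ := hT.exists_vert_degree_one_of_nontrivial
  obtain ⟨z, hyz, hz⟩ := degree_eq_one_iff_existsUnique_adj.1 hy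
  obtain ⟨a, b, hza, hab, hbz⟩ := hT.exists_adj_adj_of_ne_starGraph (hstar z)
  exact ⟨y, z, a, b, hyz, hz, hza, hab, hbz⟩

theorem IsTree.four_le_card [Fintype α] (hT : T.IsTree)
    (hstar : ∀ z, T ≠ SimpleGraph.starGraph z) : 4 ≤ Fintype.card α := by
  obtain ⟨y, z, a, b, hyz, hy, hza, hab, hbz⟩ := hT.exists_leaf_adj_adj hstar
  have hya : y ≠ a := by rintro rfl; exact hbz (hy b hab)
  have hyb : y ≠ b := by rintro rfl; exact hza.ne (hy a hab.symm).symm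
  calc 4 = #{y, z, a, b} := by
        rw [card_insert_of_notMem (by simp [hyz.ne, hya, hyb]),
          card_insert_of_notMem (by simp [hza.ne, hbz.symm]), card_pair hab.ne]
    _ ≤ _ := card_le_univ _

/-- For a tree and `z ∈ s`, these are the vertex sets of the subtrees containing `z`. -/
def IsClosedTowards (T : SimpleGraph α) (z : α) (s : Finset α) : Prop :=
  ∀ ⦃u v⦄, v ∈ s → T.Adj u v → T.dist z u < T.dist z v → u ∈ s

def IsPartialCopy (T : SimpleGraph α) (G : SimpleGraph β) (s : Finset α) (f : α → β) : Prop :=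
  Set.InjOn f s ∧ ∀ ⦃u⦄, u ∈ s → ∀ ⦃v⦄, v ∈ s → T.Adj u v → G.Adj (f u) (f v)

variable {G : SimpleGraph β} {z : α} {s : Finset α} {f : α → β}

theorem IsClosedTowards.singleton : T.IsClosedTowards z {z} := fun u v hv _ hlt => by
  rw [mem_singleton.1 hv, dist_self] at hlt
  omega

theorem IsClosedTowards.univ_erase [Fintype α] {y : α} (hy : ∀ w, T.Adj y w → w = z) :
    T.IsClosedTowards z (univ.erase y) := fun u v _ huv hlt => by
  refine mem_erase.2 ⟨?_, mem_univ u⟩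
  rintro rfl
  rw [hy v huv, dist_self] at hlt
  omega

theorem IsClosedTowards.eq_of_adj [Fintype α] (hT : T.IsTree) (hs : T.IsClosedTowards z s)
    {p w v : α} (hw : w ∉ s) (hpw : T.Adj p w) (hlt : T.dist z p < T.dist z w) (hv : v ∈ s)
    (hwv : T.Adj w v) : v = p := by
  have hne := hT.dist_ne_of_adj z hwv
  by_cases h : T.dist z w < T.dist z v
  · exact absurd (hs hv hwv h) hw
  · exact hT.eq_of_adj_of_dist_lt hwv.symm hpw (by omega) hlt

theorem IsPartialCopy.singleton (x : β) : IsPartialCopy T G {z} fun _ => x :=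
  ⟨by simp, fun u hu v hv huv => by simp_all⟩

theorem IsPartialCopy.isContained [Fintype α] (hf : IsPartialCopy T G univ f) : T ⊑ G :=
  ⟨⟨⟨f, fun h => hf.2 (mem_univ _) (mem_univ _) h⟩, fun _ _ h => hf.1 (by simp) (by simp) h⟩⟩

theorem IsPartialCopy.update (hf : IsPartialCopy T G s f) {p w : α} {x : β} (hw : w ∉ s)
    (hwp : ∀ v ∈ s, T.Adj w v → v = p) (hx : G.Adj (f p) x) (hxs : x ∉ s.image f) :
    IsPartialCopy T G (insert w s) (Function.update f w x) := by
  have hfs : ∀ v ∈ s, Function.update f w x v = f v := fun v hv =>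
    Function.update_of_ne (ne_of_mem_of_not_mem hv hw) _ _
  refine ⟨?_, ?_⟩
  · rw [coe_insert, Set.injOn_insert (mem_coe.not.2 hw)]
    refine ⟨hf.1.congr fun v hv => (hfs v hv).symm, ?_⟩
    rintro ⟨v, hv, he⟩
    rw [hfs v hv, Function.update_self] at he
    exact hxs (he ▸ mem_image_of_mem f hv)
  · intro u hu v hv huv
    rcases mem_insert.1 hu with rfl | hus <;> rcases mem_insert.1 hv with rfl | hvs
    · exact absurd huv T.irrefl
    · rw [Function.update_self, hfs v hvs, hwp v hvs huv]
      exact hx.symm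
    · rw [Function.update_self, hfs u hus, hwp u hus huv.symm]
      exact hx
    · rw [hfs u hus, hfs v hvs]
      exact hf.2 hus hvs huv

theorem IsPartialCopy.insert [Fintype α] (hT : T.IsTree) (hs : T.IsClosedTowards z s)
    (hf : IsPartialCopy T G s f) {p w : α} {x : β} (hp : p ∈ s) (hw : w ∉ s) (hpw : T.Adj p w)
    (hlt : T.dist z p < T.dist z w) (hx : G.Adj (f p) x) (hxs : x ∉ s.image f) :
    IsPartialCopy T G (insert w s) (Function.update f w x) ∧
      T.IsClosedTowards z (insert w s) := by
  refine ⟨hf.update hw (fun v hv hwv => hs.eq_of_adj hT hw hpw hlt hv hwv) hx hxs, ?_⟩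
  intro u v hv huv hluv
  rcases mem_insert.1 hv with rfl | hv
  · exact mem_insert_of_mem (hT.eq_of_adj_of_dist_lt huv hpw hluv hlt ▸ hp)
  · exact mem_insert_of_mem (hs hv huv hluv)

theorem IsPartialCopy.exists_extend [Fintype α] [Fintype β] [DecidableRel G.Adj]
    (hT : T.IsTree) {d : ℕ} (hG : ∀ v, d ≤ G.degree v) {U : Finset α}
    (hU : T.IsClosedTowards z U) (hUd : #U ≤ d + 1) (hs : T.IsClosedTowards z s) (hzs : z ∈ s)
    (hsU : s ⊆ U) (hf : IsPartialCopy T G s f) :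
    ∃ g, IsPartialCopy T G U g ∧ ∀ v ∈ s, g v = f v := by
  obtain ⟨k, hk⟩ : ∃ k, #(U \ s) = k := ⟨_, rfl⟩
  induction k generalizing s f with
  | zero =>
    obtain rfl : s = U := hsU.antisymm (sdiff_eq_empty_iff_subset.1 (card_eq_zero.1 hk))
    exact ⟨f, hf, fun _ _ => rfl⟩
  | succ k ih =>
    obtain ⟨w, hw, hmin⟩ := exists_min_image (U \ s) (T.dist z) (card_pos.1 (by omega))
    rw [mem_sdiff] at hw
    obtain ⟨p, hpw, hlt⟩ := hT.connected.exists_adj_dist_lt (ne_of_mem_of_not_mem hzs hw.2).symm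
    have hp : p ∈ s := by
      by_contra hp
      exact (hmin p (mem_sdiff.2 ⟨hU hw.1 hpw hlt, hp⟩)).not_gt hlt
    have hsd : #s ≤ d := by
      have := card_lt_card (ssubset_iff_of_subset hsU |>.2 ⟨w, hw⟩)
      omega
    obtain ⟨x, hx, hxs⟩ := exists_adj_notMem (G := G) (x := f p) (A := s.image f)
      (singleton_subset_iff.2 (mem_image_of_mem f hp)) (by simp) <| by
        have := card_image_le (s := s) (f := f)
        have := hG (f p)
        rw [card_singleton]
        omega
    obtain ⟨hf', hs'⟩ := hf.insert hT hs hp hw.2 hpw hlt hx hxs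
    obtain ⟨g, hg, hgf⟩ := ih hs' (mem_insert_of_mem hzs) (insert_subset hw.1 hsU) hf' <| by
      rw [sdiff_insert, card_erase_of_mem (mem_sdiff.2 hw), hk, Nat.add_sub_cancel]
    refine ⟨g, hg, fun v hv => ?_⟩
    rw [hgf v (mem_insert_of_mem hv), Function.update_of_ne (ne_of_mem_of_not_mem hv hw.2)]

theorem IsTree.exists_isPartialCopy_path [Fintype α] (hT : T.IsTree) {a b : α}
    (hza : T.Adj z a) (hab : T.Adj a b) (hbz : b ≠ z) {r x x' : β} (hrx : G.Adj r x)
    (hxx' : G.Adj x x') (hx'r : x' ≠ r) :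
    ∃ f, IsPartialCopy T G {b, a, z} f ∧ T.IsClosedTowards z {b, a, z} ∧ f z = r ∧ f b = x' := by
  have hza' : T.dist z a = 1 := dist_eq_one_iff_adj.2 hza
  have hzb : 1 < T.dist z b := by
    have := hT.dist_ne_of_adj z hab
    have := (hT.connected.pos_dist_of_ne hbz.symm).ne'
    omega
  obtain ⟨h₁, hc₁⟩ := (IsPartialCopy.singleton r).insert hT IsClosedTowards.singleton
    (mem_singleton_self z) (by simpa using hza.ne') hza (by simp [hza']) hrx
    (by simpa using hrx.ne')
  obtain ⟨h₂, hc₂⟩ := h₁.insert hT hc₁ (mem_insert_self a {z}) (by simp [hab.ne', hbz]) hab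
    (by omega) (by simpa [hza.ne'] using hxx') (by simp [hxx'.ne', hx'r, hza.ne])
  exact ⟨_, h₂, hc₂, by simp [hza.ne, hbz.symm], by simp⟩

/-- With `y` a leaf of `T` attached to `z` and `z a b` a path in `T`, embed `T - y` greedily
sending `z a b` to `r x x'`. Then `y` fits at a neighbour of `r`: either `r` has degree
`≥ n - 1`, or `x'` is a vertex of the image that is not a neighbour of `r`. -/
theorem IsTree.isContained_of_adj_adj [Fintype α] [Fintype β] [DecidableRel G.Adj]
    (hT : T.IsTree) (hstar : ∀ z, T ≠ SimpleGraph.starGraph z)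
    (hG : ∀ v, Fintype.card α - 2 ≤ G.degree v) {r x x' : β} (hrx : G.Adj r x)
    (hxx' : G.Adj x x') (hx'r : x' ≠ r)
    (hr : Fintype.card α - 1 ≤ G.degree r ∨ ¬ G.Adj r x') : T ⊑ G := by
  obtain ⟨y, z, a, b, hyz, hy, hza, hab, hbz⟩ := hT.exists_leaf_adj_adj hstar
  have h4 := hT.four_le_card hstar
  have hya : a ≠ y := by rintro rfl; exact hbz (hy b hab)
  have hyb : b ≠ y := by rintro rfl; exact hza.ne (hy a hab.symm).symm
  obtain ⟨f, hf, hcf, hfz, hfb⟩ := hT.exists_isPartialCopy_path hza hab hbz hrx hxx' hx'r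
  obtain ⟨g, hg, hgf⟩ := hf.exists_extend hT hG (IsClosedTowards.univ_erase hy) (by simp; omega)
    hcf (by simp) (by simp [insert_subset_iff, hya, hyb, hyz.ne'])
  have hgz : g z = r := hfz ▸ hgf z (by simp)
  set A := (univ.erase y).image g
  have hrA : r ∈ A := hgz ▸ mem_image_of_mem g (by simp [hyz.ne'])
  have hx'A : x' ∈ A := hfb ▸ hgf b (by simp) ▸ mem_image_of_mem g (by simp [hyb])
  have hA : #A ≤ Fintype.card α - 1 := card_image_le.trans (by simp)
  obtain ⟨y', hry', hy'⟩ : ∃ y', G.Adj r y' ∧ y' ∉ A := by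
    rcases hr with hr | hr
    · exact exists_adj_notMem (singleton_subset_iff.2 hrA) (by simp) (by simp; omega)
    · refine exists_adj_notMem (insert_subset hrA (singleton_subset_iff.2 hx'A)) (by simp [hr])
        ?_
      have := hG r
      rw [card_pair hx'r.symm]
      omega
  obtain ⟨hfin, -⟩ := hg.insert hT (IsClosedTowards.univ_erase hy)
    (mem_erase.2 ⟨hyz.ne', mem_univ z⟩) (by simp) hyz.symm
    (by rw [dist_self, dist_eq_one_iff_adj.2 hyz.symm]; omega) (hgz ▸ hry') hy'
  rw [insert_erase (mem_univ y)] at hfin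
  exact hfin.isContained

section MinDegree

variable [Fintype α] [Fintype β] [DecidableRel G.Adj] (hT : T.IsTree)
  (hstar : ∀ z, T ≠ SimpleGraph.starGraph z) (hG : ∀ v, Fintype.card α - 2 ≤ G.degree v)
  (hTG : ¬ T ⊑ G)
include hT hstar hG hTG

theorem degree_lt_of_not_isContained (r : β) : G.degree r < Fintype.card α - 1 := by
  by_contra! hr
  have h4 := hT.four_le_card hstar
  obtain ⟨x, hrx⟩ := (G.degree_pos_iff_exists_adj r).1 (by omega)
  obtain ⟨x', hx', hx'r⟩ := exists_mem_ne (s := G.neighborFinset x)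
    (by rw [card_neighborFinset_eq_degree]; have := hG x; omega) r
  exact hTG (hT.isContained_of_adj_adj hstar hG hrx ((mem_neighborFinset _ _ _).1 hx') hx'r
    (Or.inl hr))

theorem adj_of_reachable_of_not_isContained {r w : β} (h : G.Reachable r w) (hrw : r ≠ w) :
    G.Adj r w := by
  by_contra hadj
  obtain ⟨p⟩ := h
  obtain ⟨d, -, hd₁, hd₂⟩ :=
    p.exists_boundary_dart {v | v = r ∨ G.Adj r v} (Or.inl rfl) (by simp [hrw.symm, hadj])
  simp only [Set.mem_ofPred_eq, not_or] at hd₁ hd₂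
  have hfst : G.Adj r d.fst := hd₁.resolve_left fun h => hd₂.2 (h ▸ d.adj)
  exact hTG (hT.isContained_of_adj_adj hstar hG hfst d.adj hd₂.1 (Or.inr hd₂.2))

theorem dvd_card_of_not_isContained : Fintype.card α - 1 ∣ Fintype.card β := by
  set C := G.connectedComponentMk
  rw [← card_univ (α := β), card_eq_sum_card_image C univ]
  refine dvd_sum fun c hc => ?_
  obtain ⟨r, -, rfl⟩ := mem_image.1 hc
  have hcomp : {v ∈ (univ : Finset β) | C v = C r} = insert r (G.neighborFinset r) := by
    ext v
    simp only [C, mem_filter, mem_univ, true_and, ConnectedComponent.eq, mem_insert,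
      mem_neighborFinset]
    refine ⟨fun h => ?_, ?_⟩
    · by_cases hv : v = r
      · exact Or.inl hv
      · exact Or.inr (adj_of_reachable_of_not_isContained hT hstar hG hTG h.symm (Ne.symm hv))
    · rintro (rfl | h)
      · rfl
      · exact h.reachable.symm
  rw [hcomp, card_insert_of_notMem (by simp), card_neighborFinset_eq_degree]
  have := degree_lt_of_not_isContained hT hstar hG hTG r
  have := hG r
  have := hT.four_le_card hstar
  rw [show G.degree r + 1 = Fintype.card α - 1 by omega]

end MinDegree

theorem dvd_card_of_le_card_inter [Fintype α] [Fintype β] [DecidableRel G.Adj] (hT : T.IsTree)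
    (hstar : ∀ z, T ≠ SimpleGraph.starGraph z) (hTG : ¬ T ⊑ G) {S : Finset β}
    (hS : ∀ v ∈ S, Fintype.card α - 2 ≤ #(G.neighborFinset v ∩ S)) :
    Fintype.card α - 1 ∣ #S := by
  have hdeg : ∀ v : (S : Set β), Fintype.card α - 2 ≤ (G.induce S).degree v := fun v => by
    rw [← card_neighborFinset_eq_degree, ← card_map (.subtype _)]
    convert hS v v.2 using 2
    ext w
    simp [and_comm]
  simpa using dvd_card_of_not_isContained hT hstar hdeg
    fun h => hTG (h.trans ⟨Copy.induce G _⟩)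

theorem card_le_card_neighborFinset_inter_add {V : Type*} [Fintype V]
    {G₀ G₁ G₂ : SimpleGraph V} [DecidableRel G₀.Adj] [DecidableRel G₁.Adj]
    [DecidableRel G₂.Adj] (hcover : ∀ u v, u ≠ v → G₀.Adj u v ∨ G₁.Adj u v ∨ G₂.Adj u v)
    {S : Finset V} {v : V} (hv : v ∈ S) :
    #S ≤ #(G₀.neighborFinset v ∩ S) + #(G₁.neighborFinset v ∩ S) +
      #(G₂.neighborFinset v ∩ S) + 1 := by
  have hsplit : S.erase v ⊆
      (G₀.neighborFinset v ∩ S ∪ G₁.neighborFinset v ∩ S) ∪ G₂.neighborFinset v ∩ S :=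
    fun u hu => by
      obtain ⟨huv, hu⟩ := mem_erase.1 hu
      rcases hcover v u huv.symm with h | h | h <;> simp [h, hu]
  have hcard := card_le_card hsplit
  rw [card_erase_of_mem hv] at hcard
  have := card_union_le (G₀.neighborFinset v ∩ S ∪ G₁.neighborFinset v ∩ S)
    (G₂.neighborFinset v ∩ S)
  have := card_union_le (G₀.neighborFinset v ∩ S) (G₁.neighborFinset v ∩ S)
  omega

theorem exists_isNClique_of_not_isContained [Fintype α] {V : Type*} [Fintype V]
    {G₀ G₁ G₂ : SimpleGraph V} [DecidableRel G₀.Adj] [DecidableRel G₁.Adj]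
    [DecidableRel G₂.Adj] (hcover : ∀ u v, u ≠ v → G₀.Adj u v ∨ G₁.Adj u v ∨ G₂.Adj u v)
    (hT : T.IsTree) (hstar : ∀ z, T ≠ SimpleGraph.starGraph z) {ℓ k : ℕ}
    (h₀ : ∀ v, G₀.degree v < ℓ) (h₁ : ¬ T ⊑ G₁) (hk : ℓ + Fintype.card α ≤ k + 3)
    (hdvd : Fintype.card α - 1 ∣ k) (j : ℕ) {S : Finset V} (hS : k * j + 1 ≤ #S) :
    ∃ t ⊆ S, G₂.IsNClique (j + 1) t := by
  induction j generalizing S with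
  | zero =>
    obtain ⟨v, hv⟩ := card_pos.1 (by omega : 0 < #S)
    exact ⟨{v}, singleton_subset_iff.2 hv, by simp⟩
  | succ j ih =>
    obtain ⟨S', hS'S, hS'⟩ := exists_subset_card_eq hS
    by_cases hbig : ∃ v ∈ S', k * j + 1 ≤ #(G₂.neighborFinset v ∩ S')
    · obtain ⟨v, hv, hcard⟩ := hbig
      obtain ⟨t, ht, hclique⟩ := ih hcard
      refine ⟨insert v t, insert_subset (hS'S hv) (ht.trans (inter_subset_right.trans hS'S)),
        hclique.insert fun b hb => ?_⟩
      exact (mem_neighborFinset _ _ _).1 (mem_of_mem_inter_left (ht hb))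
    · push Not at hbig
      have hdeg : ∀ v ∈ S', Fintype.card α - 2 ≤ #(G₁.neighborFinset v ∩ S') := by
        intro v hv
        have hsplit := card_le_card_neighborFinset_inter_add hcover hv
        rw [hS', Nat.mul_succ] at hsplit
        have h₀' : #(G₀.neighborFinset v ∩ S') < ℓ := (card_le_card inter_subset_left).trans_lt
          ((card_neighborFinset_eq_degree G₀ v).trans_lt (h₀ v))
        have := hbig v hv
        omega
      have h4 := hT.four_le_card hstar
      have hdvd' := dvd_card_of_le_card_inter hT hstar h₁ hdeg
      rw [hS', Nat.mul_succ] at hdvd'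
      have := Nat.le_of_dvd one_pos ((Nat.dvd_add_right ((hdvd.mul_right j).add hdvd)).1 hdvd')
      omega

end SimpleGraph

variable {α β : Type*}

theorem copies_iff_isContained {H : SimpleGraph α} {G : SimpleGraph β} : Copies H G ↔ H ⊑ G :=
  ⟨fun ⟨f, hf, hadj⟩ => ⟨⟨⟨f, @hadj⟩, hf⟩⟩,
    fun ⟨f⟩ => ⟨f, f.injective, fun _ _ h => f.toHom.map_adj h⟩⟩

theorem copies_starGraph_iff [Fintype β] {G : SimpleGraph β} [DecidableRel G.Adj] {ℓ : ℕ} :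
    Copies (_root_.starGraph ℓ) G ↔ ∃ v, ℓ ≤ G.degree v := by
  change Copies (SimpleGraph.starGraph (0 : Fin (ℓ + 1))) G ↔ _
  constructor
  · rintro ⟨f, hf, hadj⟩
    refine ⟨f 0, ?_⟩
    have hsub : univ.image (f ∘ Fin.succ) ⊆ G.neighborFinset (f 0) := fun v hv => by
      obtain ⟨i, -, rfl⟩ := mem_image.1 hv
      exact (mem_neighborFinset _ _ _).2 (hadj (starGraph_center_adj (Fin.succ_ne_zero i).symm))
    have := card_le_card hsub
    rwa [card_image_of_injective _ (hf.comp (Fin.succ_injective _)), card_univ,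
      Fintype.card_fin, card_neighborFinset_eq_degree] at this
  · rintro ⟨v, hv⟩
    obtain ⟨U, hU, hUcard⟩ :=
      exists_subset_card_eq (hv.trans (card_neighborFinset_eq_degree G v).ge)
    let e : Fin ℓ ≃ U := (Fintype.equivFinOfCardEq (by simpa using hUcard)).symm
    have hUadj : ∀ i, G.Adj v (e i) := fun i => (mem_neighborFinset _ _ _).1 (hU (e i).2)
    refine ⟨Fin.cons v fun i => e i, Fin.cons_injective_iff.2 ⟨?_, ?_⟩, ?_⟩
    · rintro ⟨i, hi⟩
      exact G.irrefl (hi ▸ hUadj i)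
    · exact Subtype.val_injective.comp e.injective
    · intro a b hab
      rw [starGraph_adj] at hab
      obtain ⟨hne, rfl | rfl⟩ := hab
      · obtain ⟨i, rfl⟩ := Fin.exists_succ_eq.2 (Ne.symm hne)
        simpa using hUadj i
      · obtain ⟨i, rfl⟩ := Fin.exists_succ_eq.2 hne
        simpa using (hUadj i).symm

theorem colorGraph_adj {N k : ℕ} {c : Fin N → Fin N → Fin k} (hc : ∀ a b, c a b = c b a)
    {i : Fin k} {u v : Fin N} : (colorGraph c i).Adj u v ↔ u ≠ v ∧ c u v = i := by
  rw [colorGraph, fromRel_adj, hc v u, or_self]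

theorem ramseyProp3_of_dvd [Fintype α] {T : SimpleGraph α} (hT : T.IsTree)
    (hstar : ∀ z, T ≠ SimpleGraph.starGraph z) {ℓ k m : ℕ} (hm : m ≠ 0)
    (hk : ℓ + Fintype.card α ≤ k + 3) (hdvd : Fintype.card α - 1 ∣ k) :
    RamseyProp3 (k * (m - 1) + 1) (_root_.starGraph ℓ) T (⊤ : SimpleGraph (Fin m)) := by
  intro c hc
  by_cases h₀ : Copies (_root_.starGraph ℓ) (colorGraph c 0)
  · exact Or.inl h₀
  by_cases h₁ : Copies T (colorGraph c 1)
  · exact Or.inr (Or.inl h₁)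
  refine Or.inr (Or.inr ?_)
  have hcover : ∀ u v, u ≠ v → (colorGraph c 0).Adj u v ∨ (colorGraph c 1).Adj u v ∨
      (colorGraph c 2).Adj u v := fun u v huv => by
    simp only [colorGraph_adj hc, huv, ne_eq, not_false_eq_true, true_and]
    generalize c u v = i
    fin_cases i <;> simp
  obtain ⟨t, -, ht⟩ := exists_isNClique_of_not_isContained hcover hT hstar
    (fun v => not_le.1 fun h => h₀ (copies_starGraph_iff.2 ⟨v, h⟩))
    (mt copies_iff_isContained.2 h₁) hk hdvd (m - 1) (S := univ) (by simp)
  rw [Nat.sub_add_cancel (Nat.one_le_iff_ne_zero.2 hm)] at ht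
  exact copies_iff_isContained.2 ((not_cliqueFree_iff_top_isContained m).1 fun h => h t ht)

section BlockColoring

variable {N a b c : ℕ} (ι : Fin N → Fin a × Fin b × Fin c)

def blockColoring (u v : Fin N) : Fin 3 :=
  if (ι u).1 ≠ (ι v).1 then 2 else if (ι u).2.1 ≠ (ι v).2.1 then 0 else 1

variable {ι}

theorem blockColoring_comm (u v : Fin N) : blockColoring ι u v = blockColoring ι v u := by
  unfold blockColoring
  simp only [ne_comm]

theorem blockColoring_eq_zero {u v : Fin N} :
    blockColoring ι u v = 0 ↔ (ι u).1 = (ι v).1 ∧ (ι u).2.1 ≠ (ι v).2.1 := by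
  unfold blockColoring
  split_ifs <;> simp_all

theorem blockColoring_eq_one {u v : Fin N} :
    blockColoring ι u v = 1 ↔ (ι u).1 = (ι v).1 ∧ (ι u).2.1 = (ι v).2.1 := by
  unfold blockColoring
  split_ifs <;> simp_all

theorem blockColoring_eq_two {u v : Fin N} : blockColoring ι u v = 2 ↔ (ι u).1 ≠ (ι v).1 := by
  unfold blockColoring
  split_ifs <;> simp_all

theorem degree_colorGraph_blockColoring_zero_le (hι : Function.Injective ι) (x : Fin N) :
    (colorGraph (blockColoring ι) 0).degree x ≤ (b - 1) * c := by
  rw [← card_neighborFinset_eq_degree]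
  have := card_le_card_of_injOn (s := (colorGraph (blockColoring ι) 0).neighborFinset x)
    (t := (univ.erase (ι x).2.1) ×ˢ univ) (fun v => (ι v).2) (fun v hv => ?_) ?_
  · simpa using this
  · rw [mem_coe, mem_neighborFinset, colorGraph_adj blockColoring_comm,
      blockColoring_eq_zero] at hv
    simpa using hv.2.2.symm
  · intro u hu v hv huv
    rw [mem_coe, mem_neighborFinset, colorGraph_adj blockColoring_comm,
      blockColoring_eq_zero] at hu hv
    exact hι (Prod.ext (hu.2.1.symm.trans hv.2.1) huv)

theorem card_le_of_copies_colorGraph_one [Fintype α] (hι : Function.Injective ι)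
    {T : SimpleGraph α} (hT : T.Connected) (h : Copies T (colorGraph (blockColoring ι) 1)) :
    Fintype.card α ≤ c := by
  obtain ⟨f, hf, hadj⟩ := h
  obtain ⟨v₀⟩ := hT.nonempty
  let block : α → Fin a × Fin b := fun v => ((ι (f v)).1, (ι (f v)).2.1)
  have hblock : ∀ v, block v = block v₀ := fun v =>
    (hT.preconnected v v₀).eq_of_forall_adj (g := block) fun u w huw => by
      obtain ⟨-, h⟩ := (colorGraph_adj blockColoring_comm).1 (hadj huw)
      exact Prod.ext_iff.2 (blockColoring_eq_one.1 h)
  simpa using Fintype.card_le_of_injective (fun v => (ι (f v)).2.2) fun u w huw => by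
    have := (hblock u).trans (hblock w).symm
    exact hf (hι (Prod.ext (Prod.ext_iff.1 this).1 (Prod.ext (Prod.ext_iff.1 this).2 huw)))

theorem le_of_copies_colorGraph_two {m : ℕ}
    (h : Copies (⊤ : SimpleGraph (Fin m)) (colorGraph (blockColoring ι) 2)) : m ≤ a := by
  obtain ⟨f, hf, hadj⟩ := h
  simpa using Fintype.card_le_of_injective (fun v => (ι (f v)).1) fun u w huw => by
    by_contra hne
    exact blockColoring_eq_two.1 ((colorGraph_adj blockColoring_comm).1 (hadj hne)).2 huw

end BlockColoring

theorem not_ramseyProp3_of_le [Fintype α] {T : SimpleGraph α} (hT : T.Connected) {t ℓ m N : ℕ}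
    (hm : m ≠ 0) (hℓ : t * (Fintype.card α - 1) < ℓ)
    (hN : N ≤ (m - 1) * ((t + 1) * (Fintype.card α - 1))) :
    ¬ RamseyProp3 N (_root_.starGraph ℓ) T (⊤ : SimpleGraph (Fin m)) := by
  intro h
  have hcard : Fintype.card (Fin (m - 1) × Fin (t + 1) × Fin (Fintype.card α - 1)) =
      (m - 1) * ((t + 1) * (Fintype.card α - 1)) := by simp
  set ι := fun v => (Fintype.equivFinOfCardEq hcard).symm (Fin.castLE hN v)
  have hι : Function.Injective ι := (Equiv.injective _).comp (Fin.castLE_injective hN)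
  rcases h (blockColoring ι) blockColoring_comm with h₀ | h₁ | h₂
  · obtain ⟨v, hv⟩ := copies_starGraph_iff.1 h₀
    have := degree_colorGraph_blockColoring_zero_le hι v
    rw [Nat.add_sub_cancel] at this
    omega
  · have := card_le_of_copies_colorGraph_one hι hT h₁
    have := Fintype.card_pos_iff.2 hT.nonempty
    omega
  · have := le_of_copies_colorGraph_two h₂
    omega

theorem stmt9 (t n ℓ m : ℕ) (hℓ : ℓ = t * (n - 1) + 2)
    (hmod : ¬ (n - 1 ∣ m - 2)) (T : SimpleGraph (Fin n)) (hT : T.IsTree)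
    (hstar : ¬ Nonempty (T ≃g _root_.starGraph (n - 1))) :
    ramsey3 (_root_.starGraph ℓ) T (⊤ : SimpleGraph (Fin m)) = (ℓ + n - 3) * (m - 1) + 1 ∧
    ramsey3 (_root_.starGraph ℓ) T (⊤ : SimpleGraph (Fin m)) = (t + 1) * (n - 1) * (m - 1) + 1 := by
  have hn : 0 < n := Fin.pos_iff_nonempty.2 hT.connected.nonempty
  have hm : m ≠ 0 := by rintro rfl; exact hmod (dvd_zero _)
  have hstar' : ∀ z, T ≠ SimpleGraph.starGraph z := by
    rintro z rfl
    exact hstar (nonempty_iso_starGraph (by simp; omega) z 0)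
  have hk : ℓ + n - 3 = (t + 1) * (n - 1) := by
    rw [hℓ, Nat.succ_mul]
    omega
  have hr : ramsey3 (_root_.starGraph ℓ) T (⊤ : SimpleGraph (Fin m)) =
      (t + 1) * (n - 1) * (m - 1) + 1 := by
    refine IsLeast.csInf_eq ⟨ramseyProp3_of_dvd hT hstar' hm ?_ ?_, fun N hN => ?_⟩
    · simp only [Fintype.card_fin]
      omega
    · simp
    · by_contra! h
      refine not_ramseyProp3_of_le hT.connected (t := t) hm (by simp [hℓ]) ?_ hN
      simp only [Fintype.card_fin]
      rw [Nat.mul_comm (m - 1)]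
      omega
  exact ⟨hr.trans (by rw [hk]), hr⟩
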